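/- Under the twin prime conjecture (infinitely many primes p with p+2 prime), for infinitely many values of D there exists a strongly connected, aperiodic deterministic transition system of diameter D on which some pair of states has witness distance at least (D-1)(D-2)/2 + 1; hence for K ≤ (D-1)(D-2)/2 the multistep-inverse criterion with horizon K fails to separate all states. Unconditionally (using bounded prime gaps ≤ 246), for infinitely many D there exist such systems with a pair of states having witness distance exceeding (D-245)(D-2)/2. -/

import Mathlib

/-!
On `Fin q`, `q` odd, every state steps to its successor and `0` may also jump to `3`. Modulo `q`,
a walk of length `k` from `c` with `J` jumps ends at `c + k + 2J`; so walks of equal length from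
`c` to `1` and to `2` have jump counts `J₁, J₂` with `2J₂ ≡ 2J₁ + 1`, which forces
`max J₁ J₂ ≥ (q - 1) / 2`. After a jump the walk needs `q - 3` more steps to be back at `0`, so
jumps are at least `q - 2` steps apart and such a walk has length at least `(q - 2)(q - 3)/2 + 1`,
while the diameter is `q - 1`. The cycles of lengths `q` and `q - 2` through `0` have coprime
lengths, which makes the system aperiodic.
-/

/-- There is a directed walk of length `k` from `u` to `v` along relation `R`. -/
def HasWalk {V : Type*} (R : V → V → Prop) (u v : V) (k : ℕ) : Prop :=
  ∃ f : ℕ → V, f 0 = u ∧ f k = v ∧ ∀ i < k, R (f i) (f (i + 1))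

section HasWalk

variable {V : Type*} {R : V → V → Prop}

theorem HasWalk.append {u v w : V} {k l : ℕ} (h₁ : HasWalk R u v k) (h₂ : HasWalk R v w l) :
    HasWalk R u w (k + l) := by
  obtain ⟨f, hf0, hfk, hf⟩ := h₁
  obtain ⟨g, hg0, hgl, hg⟩ := h₂
  refine ⟨fun i => if i ≤ k then f i else g (i - k), by simp [hf0], ?_, fun i hi => ?_⟩
  · rcases Nat.eq_zero_or_pos l with rfl | hl
    · simp [hfk, ← hg0, hgl]
    · simp [show ¬k + l ≤ k by omega, hgl]
  · rcases lt_trichotomy i k with hik | rfl | hik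
    · simpa [hik.le, Nat.succ_le_of_lt hik] using hf i hik
    · simpa [hfk, ← hg0] using hg 0 (by omega)
    · simpa [show ¬i ≤ k by omega, show ¬i + 1 ≤ k by omega, Nat.sub_add_comm hik.le]
        using hg (i - k) (by omega)

theorem HasWalk.single {u v : V} (h : R u v) : HasWalk R u v 1 :=
  ⟨fun i => if i = 0 then u else v, rfl, rfl, fun i hi => by simpa [Nat.lt_one_iff.mp hi] using h⟩

theorem hasWalk_iterate {g : V → V} (hg : ∀ x, R x (g x)) (x : V) (k : ℕ) :
    HasWalk R x (g^[k] x) k :=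
  ⟨fun i => g^[i] x, rfl, rfl, fun i _ => by
    simpa only [Function.iterate_succ_apply'] using hg (g^[i] x)⟩

theorem eq_one_of_dvd_closed_walks {u w : V} {a b m n d : ℕ} (huw : HasWalk R u w a)
    (hwu : HasWalk R w u b) (hm : HasWalk R w w m) (hn : HasWalk R w w n) (hm0 : 0 < m)
    (hn0 : 0 < n) (hmn : m.Coprime n) (hd : ∀ k, 0 < k → HasWalk R u u k → d ∣ k) :
    d = 1 := by
  have dvd_of_loops : ∀ {l l'}, HasWalk R w w l → HasWalk R w w l' → 0 < l → d ∣ l' := by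
    intro l l' hl hl' hl0
    have h₁ := hd _ (by omega) (huw.append (hl.append hwu))
    have h₂ := hd _ (by omega) (huw.append (hl.append (hl'.append hwu)))
    rw [show a + (l + (l' + b)) = a + (l + b) + l' by ring] at h₂
    exact (Nat.dvd_add_right h₁).mp h₂
  exact Nat.eq_one_of_dvd_coprimes hmn (dvd_of_loops hn hm hn0) (dvd_of_loops hm hn hm0)

end HasWalk

namespace ShortcutCycle

open Fin.CommRing

variable {q : ℕ} [NeZero q]

/-- The paper's system for the pair `p = q - 2 < q`: the shortcut `0 → q - p + 1` lands at `3`. -/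
def step (x : Fin q) (a : Bool) : Fin q :=
  if x = 0 ∧ a = true then 3 else x + 1

def Adj (x y : Fin q) : Prop :=
  ∃ a, step x a = y

theorem adj_add_one (x : Fin q) : Adj x (x + 1) :=
  ⟨false, by simp [step]⟩

theorem adj_zero_three : Adj (0 : Fin q) 3 :=
  ⟨true, by simp [step]⟩

theorem Adj.eq_add_one_or {x y : Fin q} (h : Adj x y) : y = x + 1 ∨ x = 0 ∧ y = 3 := by
  obtain ⟨a, rfl⟩ := h
  unfold step
  split_ifs with hx
  exacts [Or.inr ⟨hx.1, rfl⟩, Or.inl rfl]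

theorem hasWalk_add_natCast (x : Fin q) (k : ℕ) : HasWalk Adj x (x + (k : Fin q)) k := by
  simpa [add_right_iterate] using hasWalk_iterate adj_add_one x k

theorem hasWalk_sub_val (x y : Fin q) : HasWalk Adj x y (y - x).val := by
  simpa using hasWalk_add_natCast x (y - x).val

theorem hasWalk_zero_zero_sub_two (hq : 3 ≤ q) : HasWalk Adj (0 : Fin q) 0 (q - 2) := by
  have h := (HasWalk.single adj_zero_three).append (hasWalk_add_natCast (3 : Fin q) (q - 3))
  rwa [show 1 + (q - 3) = q - 2 by omega, Nat.cast_sub hq, Fin.natCast_self, Nat.cast_ofNat,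
    zero_sub, add_neg_cancel] at h

theorem aperiodic (hq : 3 ≤ q) (hodd : Odd q) (u : Fin q) (d : ℕ)
    (hd : ∀ k, 0 < k → HasWalk Adj u u k → d ∣ k) : d = 1 := by
  have hcop : q.Coprime (q - 2) := by
    rwa [Nat.coprime_self_sub_right (by omega), Nat.coprime_two_right]
  refine eq_one_of_dvd_closed_walks (hasWalk_sub_val u 0) (hasWalk_sub_val 0 u) ?_
    (hasWalk_zero_zero_sub_two hq) (NeZero.pos q) (by omega) hcop hd
  simpa using hasWalk_add_natCast (0 : Fin q) q

theorem val_add_one_le (x : Fin q) : (x + 1).val ≤ x.val + 1 := by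
  rw [Fin.val_add]
  exact (Nat.mod_le _ _).trans (Nat.add_le_add_left (by simp [Nat.mod_le]) _)

theorem val_neg_three (hq : 3 < q) : (-3 : Fin q).val = q - 3 := by
  simp [Fin.val_neg', Nat.mod_eq_of_lt hq]

def jumps (f : ℕ → Fin q) : ℕ → ℕ
  | 0 => 0
  | i + 1 => jumps f i + if f i = 0 ∧ f (i + 1) = 3 then 1 else 0

section Walk

variable {f : ℕ → Fin q} {k : ℕ} (hf : ∀ i < k, Adj (f i) (f (i + 1)))
include hf

theorem eq_add_add_two_mul_jumps : ∀ i ≤ k, f i = f 0 + i + 2 * jumps f i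
  | 0, _ => by simp [jumps]
  | i + 1, hi => by
    have ih := eq_add_add_two_mul_jumps i (by omega)
    by_cases hjump : f i = 0 ∧ f (i + 1) = 3
    · rw [jumps, if_pos hjump, hjump.2]
      rw [hjump.1] at ih
      push_cast
      linear_combination ih
    · rw [jumps, if_neg hjump, add_zero]
      obtain h | h := (hf i (by omega)).eq_add_one_or
      · rw [h, ih]
        push_cast
        ring
      · exact absurd h hjump

/-- After a shortcut the walk sits at `3`, and `(f i - 3).val` steps later it has not yet
returned to `0`, so shortcuts are at least `q - 2` steps apart. -/
theorem jumps_mul_add_val_sub_three_le (hq : 3 < q) :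
    ∀ i ≤ k, jumps f i ≠ 0 → jumps f i * (q - 2) + (f i - 3).val + 3 ≤ i + q
  | 0, _, h => absurd rfl h
  | i + 1, hi, hJ => by
    have ih := jumps_mul_add_val_sub_three_le hq i (by omega)
    by_cases hjump : f i = 0 ∧ f (i + 1) = 3
    · rw [jumps, if_pos hjump, hjump.2, sub_self, Fin.val_zero]
      rw [hjump.1, zero_sub, val_neg_three hq] at ih
      rcases Nat.eq_zero_or_pos (jumps f i) with h0 | hpos
      · rw [h0]
        omega
      · have := ih hpos.ne'
        rw [add_mul, one_mul]
        omega
    · rw [jumps, if_neg hjump, add_zero] at hJ ⊢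
      obtain h | h := (hf i (by omega)).eq_add_one_or
      · have := ih hJ
        have := val_add_one_le (f i - 3)
        rw [h, add_sub_right_comm]
        omega
      · exact absurd h hjump

theorem le_length_of_half_le_jumps (hq : 3 < q) (hodd : Odd q) (hJ : (q - 1) / 2 ≤ jumps f k) :
    (q - 2) * (q - 3) / 2 + 1 ≤ k := by
  obtain ⟨n, rfl⟩ : ∃ n, q = 2 * n + 3 := by
    obtain ⟨m, rfl⟩ := hodd
    exact ⟨m - 1, by omega⟩
  have hspacing := jumps_mul_add_val_sub_three_le hf hq k le_rfl (by omega)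
  rw [show 2 * n + 3 - 2 = 2 * n + 1 by omega] at hspacing
  rw [show (2 * n + 3 - 1) / 2 = n + 1 by omega] at hJ
  rw [show 2 * n + 3 - 2 = 2 * n + 1 by omega, show 2 * n + 3 - 3 = 2 * n by omega,
    mul_left_comm, Nat.mul_div_cancel_left _ two_pos]
  nlinarith [Nat.mul_le_mul_right (2 * n + 1) hJ]

end Walk

theorem half_le_or_half_le_of_modEq (hodd : Odd q) {a b : ℕ} (h : 2 * a ≡ 2 * b + 1 [MOD q]) :
    (q - 1) / 2 ≤ a ∨ (q - 1) / 2 ≤ b := by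
  obtain ⟨m, rfl⟩ := hodd
  by_contra! hlt
  rw [Nat.ModEq, Nat.mod_eq_of_lt (by omega), Nat.mod_eq_of_lt (by omega)] at h
  omega

theorem le_length_of_hasWalk_one_of_hasWalk_two (hq : 3 < q) (hodd : Odd q) {c : Fin q} {k : ℕ}
    (h₁ : HasWalk Adj c 1 k) (h₂ : HasWalk Adj c 2 k) : (q - 2) * (q - 3) / 2 + 1 ≤ k := by
  obtain ⟨f, hf0, hfk, hf⟩ := h₁
  obtain ⟨g, hg0, hgk, hg⟩ := h₂
  have hf' := eq_add_add_two_mul_jumps hf k le_rfl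
  have hg' := eq_add_add_two_mul_jumps hg k le_rfl
  rw [hf0, hfk] at hf'
  rw [hg0, hgk] at hg'
  have hcast : ((2 * jumps g k : ℕ) : Fin q) = ((2 * jumps f k + 1 : ℕ) : Fin q) := by
    push_cast
    linear_combination hf' - hg'
  have hmod : 2 * jumps g k ≡ 2 * jumps f k + 1 [MOD q] := by
    simpa only [Nat.ModEq, Fin.val_natCast] using congrArg Fin.val hcast
  rcases half_le_or_half_le_of_modEq hodd hmod with hJ | hJ
  · exact le_length_of_half_le_jumps hg hq hodd hJ
  · exact le_length_of_half_le_jumps hf hq hodd hJ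

end ShortcutCycle

open ShortcutCycle in
theorem exists_aperiodic_system_with_large_witness_distance (N : ℕ) :
    ∃ D, N < D ∧ ∃ (n : ℕ) (T : Fin n → Bool → Fin n),
      (∀ u v : Fin n, ∃ k ≤ D, HasWalk (fun x y => ∃ a, T x a = y) u v k) ∧
      (∀ (u : Fin n) (d : ℕ),
        (∀ k, 0 < k → HasWalk (fun x y => ∃ a, T x a = y) u u k → d ∣ k) → d = 1) ∧
      (∃ a b : Fin n, ∀ (c : Fin n) (k : ℕ),
        HasWalk (fun x y => ∃ a', T x a' = y) c a k →
        HasWalk (fun x y => ∃ a', T x a' = y) c b k →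
        (D - 1) * (D - 2) / 2 + 1 ≤ k) := by
  have hodd : Odd (2 * N + 5) := ⟨N + 2, by ring⟩
  refine ⟨2 * N + 4, by omega, 2 * N + 5, step, fun u v => ⟨_, ?_, hasWalk_sub_val u v⟩,
    aperiodic (by omega) hodd, 1, 2, fun c k h₁ h₂ => ?_⟩
  · have := (v - u).isLt
    omega
  · have := le_length_of_hasWalk_one_of_hasWalk_two (by omega) hodd h₁ h₂
    rwa [show 2 * N + 5 - 2 = 2 * N + 4 - 1 by omega,
      show 2 * N + 5 - 3 = 2 * N + 4 - 2 by omega] at this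

/-- Lower bounds on the horizon needed by multistep-inverse methods. Under the twin
prime conjecture, for infinitely many `D` there is a strongly connected, aperiodic
deterministic transition system of diameter at most `D` with a pair of states of
witness distance at least `(D-1)(D-2)/2 + 1`; unconditionally (bounded prime gaps),
for infinitely many `D` there is such a system with a pair of states of witness
distance exceeding `(D-245)(D-2)/2`. -/
theorem multistep_inverse_lower_bounds :
    ((∀ N : ℕ, ∃ p, N < p ∧ Nat.Prime p ∧ Nat.Prime (p + 2)) →
      ∀ N : ℕ, ∃ D, N < D ∧
        ∃ (n : ℕ) (T : Fin n → Bool → Fin n),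
          (∀ u v : Fin n, ∃ k ≤ D, HasWalk (fun x y => ∃ a, T x a = y) u v k) ∧
          (∀ (u : Fin n) (d : ℕ),
            (∀ k, 0 < k → HasWalk (fun x y => ∃ a, T x a = y) u u k → d ∣ k) →
            d = 1) ∧
          (∃ a b : Fin n, ∀ (c : Fin n) (k : ℕ),
            HasWalk (fun x y => ∃ a', T x a' = y) c a k →
            HasWalk (fun x y => ∃ a', T x a' = y) c b k →
            (D - 1) * (D - 2) / 2 + 1 ≤ k)) ∧
    (∀ N : ℕ, ∃ D, N < D ∧
      ∃ (n : ℕ) (T : Fin n → Bool → Fin n),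
        (∀ u v : Fin n, ∃ k ≤ D, HasWalk (fun x y => ∃ a, T x a = y) u v k) ∧
        (∀ (u : Fin n) (d : ℕ),
          (∀ k, 0 < k → HasWalk (fun x y => ∃ a, T x a = y) u u k → d ∣ k) →
          d = 1) ∧
        (∃ a b : Fin n, ∀ (c : Fin n) (k : ℕ),
          HasWalk (fun x y => ∃ a', T x a' = y) c a k →
          HasWalk (fun x y => ∃ a', T x a' = y) c b k →
          (D - 245) * (D - 2) / 2 < k)) := by
  refine ⟨fun _ => exists_aperiodic_system_with_large_witness_distance, fun N => ?_⟩
  obtain ⟨D, hND, n, T, hconn, haper, a, b, hwit⟩ :=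
    exists_aperiodic_system_with_large_witness_distance N
  refine ⟨D, hND, n, T, hconn, haper, a, b, fun c k h₁ h₂ => ?_⟩
  have : (D - 245) * (D - 2) / 2 ≤ (D - 1) * (D - 2) / 2 := by gcongr; omega
  have := hwit c k h₁ h₂
  omega
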